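/- arXiv:math/0509075 — 2 statements merged into one kernel-verified Lean document; each statement's English description precedes it below -/
import Mathlib

section
/- Let K be a field, V a finite-dimensional K-vector space, and V1, V2 subspaces of V with V1 + V2 = V. For every element π of the exterior square ⋀²V, the contraction map π^♯ : V* → V sends the annihilator V1⁰ into V2 if and only if π lies in the subspace ⋀²V1 + ⋀²V2 of ⋀²V. (This is Lemma 3.5 of the paper, stated with the spanning hypothesis V1 + V2 = V under which it is applied.) -/
open ExteriorAlgebra Module

section ExtSq

variable {K V : Type*} [Field K] [AddCommGroup V] [Module K V]

variable (K V) in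
/-- The exterior square `⋀²V`, realized as the degree-2 component of the exterior
algebra of `V`. -/
noncomputable def exteriorSquare : Submodule K (ExteriorAlgebra K V) :=
  LinearMap.range (ι K : V →ₗ[K] ExteriorAlgebra K V) ^ 2

/-- For a subspace `W ⊆ V`, the image of `⋀²W` in `⋀²V` under the map induced by the
inclusion `W ↪ V` (the span of the products `ι u * ι w` with `u, w ∈ W`). -/
noncomputable def exteriorSquareOf (W : Submodule K V) : Submodule K (ExteriorAlgebra K V) :=
  LinearMap.range ((ι K : V →ₗ[K] ExteriorAlgebra K V) ∘ₗ W.subtype) ^ 2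

variable {N : Type*} [AddCommGroup N] [Module K N]

/-- A bilinear map on `V` as a multilinear map on `Fin 2 → V`. -/
noncomputable def bilinToMulti (g : V →ₗ[K] V →ₗ[K] N) :
    MultilinearMap K (fun _ : Fin 2 => V) N :=
  LinearMap.uncurryLeft
    ((MultilinearMap.ofSubsingletonₗ K K V N (0 : Fin 1)).toLinearMap ∘ₗ g)

@[simp] lemma bilinToMulti_apply (g : V →ₗ[K] V →ₗ[K] N) (v : Fin 2 → V) :
    bilinToMulti g v = g (v 0) (v 1) := rfl

/-- The alternating map on `Fin 2 → V` associated to a bilinear map `g` vanishing on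
the diagonal; on a pair `(u, w)` it is `g u w`. -/
noncomputable def altOfBilin (g : V →ₗ[K] V →ₗ[K] N) (hg : ∀ v, g v v = 0) :
    V [⋀^Fin 2]→ₗ[K] N where
  toMultilinearMap := bilinToMulti g
  map_eq_zero_of_eq' := by
    intro v i j hv hij
    have h01 : v 0 = v 1 := by
      fin_cases i <;> fin_cases j <;> simp_all
    show bilinToMulti g v = 0
    rw [bilinToMulti_apply, h01, hg]

/-- The bilinear map `(u, w) ↦ (ξ ↦ ξ(u)•w − ξ(w)•u)` underlying the contraction. -/
noncomputable def contractBilin : V →ₗ[K] V →ₗ[K] (Dual K V →ₗ[K] V) :=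
  LinearMap.mk₂ K
    (fun u w => (Dual.eval K V u).smulRight w - (Dual.eval K V w).smulRight u)
    (fun u₁ u₂ w => by ext ξ; simp [add_smul, smul_add]; abel)
    (fun c u w => by ext ξ; simp [smul_sub, smul_smul, mul_comm])
    (fun u w₁ w₂ => by ext ξ; simp [add_smul, smul_add]; abel)
    (fun c u w => by ext ξ; simp [smul_sub, smul_smul, mul_comm])

/-- The contraction `(u ∧ w)^♯ : ξ ↦ ξ(u)•w − ξ(w)•u`, as an alternating map. -/
noncomputable def contractAlt : V [⋀^Fin 2]→ₗ[K] (Dual K V →ₗ[K] V) :=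
  altOfBilin contractBilin (fun v => by ext ξ; simp [contractBilin])

variable (K V) in
/-- The contraction map `π ↦ π^♯`, defined on the whole exterior algebra via
`ExteriorAlgebra.liftAlternating` from the alternating map `contractAlt` in degree 2
(and `0` in all other degrees); on the degree-2 component `⋀²V` it is determined by
`(u ∧ w)^♯(ξ) = ξ(u)•w − ξ(w)•u`. -/
noncomputable def sharp : ExteriorAlgebra K V →ₗ[K] (Dual K V →ₗ[K] V) :=
  ExteriorAlgebra.liftAlternating (Pi.single 2 contractAlt)

end ExtSq

section Aux
variable {K V : Type*} [Field K] [AddCommGroup V] [Module K V]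

lemma sharp_ι_mul_ι (u w : V) :
    sharp K V (ι K u * ι K w) = contractBilin u w := by
  rw [sharp, liftAlternating_ι_mul, liftAlternating_ι]
  rfl

lemma sharp_ι_mul_ι_apply (u w : V) (ξ : Dual K V) :
    sharp K V (ι K u * ι K w) ξ = ξ u • w - ξ w • u := by
  rw [sharp_ι_mul_ι]; simp [contractBilin]

lemma ι_mul_ι_mem_exteriorSquareOf {W : Submodule K V} {u w : V} (hu : u ∈ W) (hw : w ∈ W) :
    (ι K u : ExteriorAlgebra K V) * ι K w ∈ exteriorSquareOf W := by
  rw [exteriorSquareOf, pow_two]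
  exact Submodule.mul_mem_mul ⟨⟨u, hu⟩, rfl⟩ ⟨⟨w, hw⟩, rfl⟩

lemma sharp_apply_mem_of_mem_exteriorSquareOf {W : Submodule K V} {x : ExteriorAlgebra K V}
    (hx : x ∈ exteriorSquareOf W) (ξ : Dual K V) : sharp K V x ξ ∈ W := by
  rw [exteriorSquareOf, pow_two] at hx
  refine Submodule.mul_induction_on hx ?_ ?_
  · rintro m ⟨⟨u, hu⟩, rfl⟩ n ⟨⟨w, hw⟩, rfl⟩
    simp only [LinearMap.comp_apply, Submodule.coe_subtype]
    rw [sharp_ι_mul_ι_apply]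
    exact sub_mem (Submodule.smul_mem _ _ hw) (Submodule.smul_mem _ _ hu)
  · intro a b ha hb
    rw [map_add, LinearMap.add_apply]
    exact add_mem ha hb

lemma sharp_apply_eq_zero_of_mem_exteriorSquareOf {W : Submodule K V} {x : ExteriorAlgebra K V}
    (hx : x ∈ exteriorSquareOf W) {ξ : Dual K V} (hξ : ξ ∈ W.dualAnnihilator) :
    sharp K V x ξ = 0 := by
  rw [exteriorSquareOf, pow_two] at hx
  refine Submodule.mul_induction_on hx ?_ ?_
  · rintro m ⟨⟨u, hu⟩, rfl⟩ n ⟨⟨w, hw⟩, rfl⟩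
    simp only [LinearMap.comp_apply, Submodule.coe_subtype]
    rw [sharp_ι_mul_ι_apply, (Submodule.mem_dualAnnihilator ξ).mp hξ u hu,
      (Submodule.mem_dualAnnihilator ξ).mp hξ w hw, zero_smul, zero_smul, sub_zero]
  · intro a b ha hb
    rw [map_add, LinearMap.add_apply, ha, hb, add_zero]

end Aux

set_option maxHeartbeats 2000000 in
/-- **Lemma 3.5 of Goodearl–Yakimov.**  Let `V` be a finite-dimensional vector space
over a field `K` and `V1, V2` subspaces with `V1 + V2 = V`.  For every `π ∈ ⋀²V`, the
contraction `π^♯ : V* → V` maps the annihilator `V1⁰` into `V2` if and only if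
`π ∈ ⋀²V1 + ⋀²V2`. -/


theorem sharp_mapsTo_iff_mem_sup {K V : Type*} [Field K] [AddCommGroup V] [Module K V]
    [FiniteDimensional K V] (V1 V2 : Submodule K V) (hspan : V1 ⊔ V2 = ⊤)
    (π : ExteriorAlgebra K V) (hπ : π ∈ exteriorSquare K V) :
    (∀ ξ ∈ V1.dualAnnihilator, sharp K V π ξ ∈ V2) ↔
      π ∈ exteriorSquareOf V1 ⊔ exteriorSquareOf V2 := by
  classical
  constructor
  · intro h
    -- hard direction
    set C : Submodule K V := V1 ⊓ V2 with hCdef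
    obtain ⟨B', hB'⟩ := Submodule.exists_isCompl (C.comap V2.subtype)
    set B : Submodule K V := B'.map V2.subtype with hBdef
    have hBV2 : B ≤ V2 := Submodule.map_subtype_le _ _
    have hCmap : (C.comap V2.subtype).map V2.subtype = C := by
      rw [Submodule.map_comap_subtype]
      exact inf_eq_right.mpr inf_le_right
    have hCB : C ⊔ B = V2 := by
      rw [hBdef, ← hCmap, ← Submodule.map_sup, hB'.sup_eq_top, Submodule.map_top,
        Submodule.range_subtype]
    have hcompl : IsCompl V1 B := by
      constructor
      · rw [disjoint_iff]
        apply le_bot_iff.mp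
        intro x hx
        have hx2 : x ∈ C ⊓ B := ⟨⟨hx.1, hBV2 hx.2⟩, hx.2⟩
        rw [hBdef, ← hCmap, ← Submodule.map_inf _ (Submodule.injective_subtype V2),
          hB'.inf_eq_bot] at hx2
        simpa using hx2
      · have h2 : V2 ≤ V1 ⊔ B := by
          rw [← hCB]
          exact sup_le (le_trans inf_le_left le_sup_left) le_sup_right
        rw [codisjoint_iff, ← top_le_iff, ← hspan]
        exact sup_le le_sup_left h2
    set b1 := Module.finBasis K V1 with hb1
    set b2 := Module.finBasis K B with hb2
    set e : Basis (Fin (finrank K V1) ⊕ Fin (finrank K B)) K V :=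
      (b1.prod b2).map (Submodule.prodEquivOfIsCompl V1 B hcompl) with he
    have he1 : ∀ i, e (Sum.inl i) = (b1 i : V) := by
      intro i
      simp [he, Basis.map_apply, Submodule.coe_prodEquivOfIsCompl']
    have he2 : ∀ j, e (Sum.inr j) = (b2 j : V) := by
      intro j
      simp [he, Basis.map_apply, Submodule.coe_prodEquivOfIsCompl']
    have hsp1 : Submodule.span K (Set.range fun i => e (Sum.inl i)) = V1 := by
      have hcomp : (fun i => e (Sum.inl i)) = V1.subtype ∘ b1 := by
        funext i; simp [he1]
      rw [hcomp, Set.range_comp, Submodule.span_image, b1.span_eq, Submodule.map_top,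
        Submodule.range_subtype]
    have hmem1 : ∀ i, e (Sum.inl i) ∈ V1 := fun i => (he1 i) ▸ (b1 i).2
    have hmem2 : ∀ j, e (Sum.inr j) ∈ V2 := fun j => (he2 j) ▸ hBV2 (b2 j).2
    have hcoord : ∀ (t : Fin (finrank K B)) (i), e.coord (Sum.inr t) (e i)
        = if i = Sum.inr t then (1 : K) else 0 := by
      intro t i
      rw [Basis.coord_apply, Basis.repr_self_apply]
    have hann : ∀ t, e.coord (Sum.inr t) ∈ V1.dualAnnihilator := by
      intro t
      rw [Submodule.mem_dualAnnihilator]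
      intro v hv
      rw [← hsp1] at hv
      have hker : Submodule.span K (Set.range fun i => e (Sum.inl i))
          ≤ LinearMap.ker (e.coord (Sum.inr t)) := by
        rw [Submodule.span_le]
        rintro x ⟨i, rfl⟩
        simp only [SetLike.mem_coe, LinearMap.mem_ker, hcoord]
        simp
      exact hker hv
    have hπ' : π ∈ Submodule.span K (Set.range fun p :
          (Fin (finrank K V1) ⊕ Fin (finrank K B)) × (Fin (finrank K V1) ⊕ Fin (finrank K B)) =>
        ι K (e p.1) * ι K (e p.2)) := by
      rw [exteriorSquare, pow_two] at hπ
      have hr : LinearMap.range (ι K : V →ₗ[K] ExteriorAlgebra K V)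
          = Submodule.span K (Set.range fun i => ι K (e i)) := by
        conv_lhs => rw [← Submodule.map_top, ← e.span_eq, Submodule.map_span]
        rw [← Set.range_comp]
        rfl
      rw [hr, Submodule.span_mul_span] at hπ
      refine Submodule.span_mono ?_ hπ
      rintro z ⟨_, ⟨s, rfl⟩, _, ⟨t, rfl⟩, rfl⟩
      exact ⟨(s, t), rfl⟩
    obtain ⟨c, hc⟩ := Submodule.mem_span_range_iff_exists_fun K |>.mp hπ'
    have hsharp : ∀ t : Fin (finrank K B),
        sharp K V π (e.coord (Sum.inr t))
          = (∑ r, c (Sum.inr t, r) • e r) - ∑ s, c (s, Sum.inr t) • e s := by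
      intro t
      rw [← hc]
      simp only [map_sum, map_smul, LinearMap.sum_apply, LinearMap.smul_apply,
        sharp_ι_mul_ι_apply, smul_sub]
      rw [Finset.sum_sub_distrib]
      congr 1
      · rw [Fintype.sum_prod_type]
        rw [Finset.sum_eq_single (Sum.inr t)]
        · refine Finset.sum_congr rfl fun r _ => ?_
          rw [hcoord]
          simp
        · intro s _ hs
          refine Finset.sum_eq_zero fun r _ => ?_
          rw [hcoord]
          simp [hs]
        · simp
      · rw [Fintype.sum_prod_type]
        refine Finset.sum_congr rfl fun s _ => ?_
        rw [Finset.sum_eq_single (Sum.inr t)]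
        · rw [hcoord]; simp
        · intro r _ hr; rw [hcoord]; simp [hr]
        · simp
    have hu2 : ∀ t, (∑ s, (c (Sum.inl s, Sum.inr t) - c (Sum.inr t, Sum.inl s)) • e (Sum.inl s)) ∈ V2 := by
      intro t
      have hval : (∑ s, (c (Sum.inl s, Sum.inr t) - c (Sum.inr t, Sum.inl s)) • e (Sum.inl s))
          = (∑ r : Fin (finrank K B),
              (c (Sum.inr t, Sum.inr r) - c (Sum.inr r, Sum.inr t)) • e (Sum.inr r))
            - sharp K V π (e.coord (Sum.inr t)) := by
        rw [hsharp t, Fintype.sum_sum_type, Fintype.sum_sum_type]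
        simp only [sub_smul, Finset.sum_sub_distrib]
        abel
      rw [hval]
      refine sub_mem (Submodule.sum_mem _ fun r _ => Submodule.smul_mem _ _ (hmem2 r)) ?_
      exact h _ (hann t)
    have hswap : ∀ (x y : V), (ι K y : ExteriorAlgebra K V) * ι K x = -(ι K x * ι K y) :=
      fun x y => eq_neg_of_add_eq_zero_left (ι_add_mul_swap y x)
    have hkey : π =
        (∑ a, ∑ a', c (Sum.inl a, Sum.inl a') • (ι K (e (Sum.inl a)) * ι K (e (Sum.inl a'))))
        + (∑ b, ∑ b', c (Sum.inr b, Sum.inr b') • (ι K (e (Sum.inr b)) * ι K (e (Sum.inr b'))))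
        + ∑ t, (ι K (∑ s, (c (Sum.inl s, Sum.inr t) - c (Sum.inr t, Sum.inl s)) • e (Sum.inl s))
            * ι K (e (Sum.inr t))) := by
      have hm : (∑ a, ∑ t, c (Sum.inl a, Sum.inr t) • (ι K (e (Sum.inl a)) * ι K (e (Sum.inr t))))
          + (∑ t, ∑ a, c (Sum.inr t, Sum.inl a) • (ι K (e (Sum.inr t)) * ι K (e (Sum.inl a))))
          = ∑ t, (ι K (∑ s, (c (Sum.inl s, Sum.inr t) - c (Sum.inr t, Sum.inl s)) • e (Sum.inl s))
            * ι K (e (Sum.inr t))) := by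
        rw [Finset.sum_comm, ← Finset.sum_add_distrib]
        refine Finset.sum_congr rfl fun t _ => ?_
        rw [map_sum, Finset.sum_mul, ← Finset.sum_add_distrib]
        refine Finset.sum_congr rfl fun a _ => ?_
        rw [map_smul, smul_mul_assoc, sub_smul, hswap (e (Sum.inl a)) (e (Sum.inr t)),
          smul_neg, ← sub_eq_add_neg]
      rw [← hc, Fintype.sum_prod_type]
      simp only [Fintype.sum_sum_type]
      rw [Finset.sum_add_distrib, Finset.sum_add_distrib, ← hm]
      abel
    rw [hkey]
    refine add_mem (add_mem (Submodule.mem_sup_left ?_) (Submodule.mem_sup_right ?_))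
      (Submodule.mem_sup_right ?_)
    · exact Submodule.sum_mem _ fun a _ => Submodule.sum_mem _ fun a' _ =>
        Submodule.smul_mem _ _ (ι_mul_ι_mem_exteriorSquareOf (hmem1 a) (hmem1 a'))
    · exact Submodule.sum_mem _ fun b _ => Submodule.sum_mem _ fun b' _ =>
        Submodule.smul_mem _ _ (ι_mul_ι_mem_exteriorSquareOf (hmem2 b) (hmem2 b'))
    · exact Submodule.sum_mem _ fun t _ =>
        ι_mul_ι_mem_exteriorSquareOf (hu2 t) (hmem2 t)
  · rintro h ξ hξ
    obtain ⟨a, ha, b, hb, rfl⟩ := Submodule.mem_sup.mp h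
    rw [map_add, LinearMap.add_apply,
      sharp_apply_eq_zero_of_mem_exteriorSquareOf ha hξ, zero_add]
    exact sharp_apply_mem_of_mem_exteriorSquareOf hb ξ
end

section
/- Fix an integer N ≥ 2 and consider the polynomial ring ℂ[x_2,…,x_N, y_2,…,y_N, z] in 2N−1 variables. Let (P_{ab}) be the antisymmetric family of polynomials determined by: P(x_i,x_j) = (1/2)x_i x_j for i < j; P(y_i,y_j) = −(1/2)y_i y_j for i < j; P(z,x_i) = −(1/2)z x_i for all i; P(z,y_i) = (1/2)z y_i for all i; P(x_i,y_j) = (1/2)x_i y_j for i ≠ j; and P(x_i,y_i) = −Σ_{l=i+1}^{N} x_l y_l − (1/2)z² for all i. Then the associated bracket {f,g} = Σ_{a,b} P_{ab}·(∂f/∂x_a)·(∂g/∂x_b) satisfies the Jacobi identity {f,{g,h}} + {g,{h,f}} + {h,{f,g}} = 0 for all polynomials f, g, h, i.e. it is a Poisson bracket. (This is the Poisson structure of §5.4 of the paper: the restriction of the standard Poisson structure on the B-type compact Hermitian symmetric space to its open Schubert cell, the quasiclassical limit of odd-dimensional quantum Euclidean space.) -/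
/-!
For fixed `f` and `g` the Jacobiator `h ↦ J(f, g, h)` of the bracket of an antisymmetric family
`P` is the derivation `⁅{f, ·}, {g, ·}⁆ - {{f, g}, ·}`; by cyclic symmetry `J` vanishes as soon
as it vanishes on triples of generators.

Off the pairs `{x_i, y_i}` the family `P` is log-canonical, `P a b = c_ab X_a X_b`. If
`{X_b, X_c}` and `{X_c, X_a}` are of this form, the Leibniz rule gives
`J(X_a, X_b, X_c) = {X_c, S} - (c_ca + c_cb) X_c S` with `S = P a b`, so it suffices that
`{X_c, S} = (c_ca + c_cb) X_c S` whenever `c` is paired with neither `a` nor `b`. For unpaired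
`a, b` this is again the Leibniz rule. For `S_i = P(x_i, y_i) = -Σ_{l>i} x_l y_l - z²/2` it is a
direct computation: when `c = x_j` or `y_j` with `j > i`, the summand `l = j` contributes
`± X_c S_j`, which cancels the tail `Σ_{l>j}` and leaves only the `z²` term. Among three distinct
generators at most one pair is paired, so some cyclic ordering of any triple has this shape.
-/

open MvPolynomial

/-- The bracket on a multivariate polynomial ring associated to a family of
polynomials `P a b`: `{f, g} = Σ_{a,b} P a b · ∂f/∂x_a · ∂g/∂x_b`. -/
noncomputable def polyBracket {σ : Type*} [Fintype σ]
    (P : σ → σ → MvPolynomial σ ℂ) (f g : MvPolynomial σ ℂ) : MvPolynomial σ ℂ :=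
  ∑ a : σ, ∑ b : σ, P a b * pderiv a f * pderiv b g

namespace StmtB

/-- Index set for the variables `x_2, …, x_N, y_2, …, y_N, z` (with `m = N - 1`):
`Sum.inl (Sum.inl i)` is `x_{i+2}`, `Sum.inl (Sum.inr i)` is `y_{i+2}`, and
`Sum.inr ()` is `z`. -/
abbrev Idx (m : ℕ) := (Fin m ⊕ Fin m) ⊕ Unit

variable {m : ℕ}

noncomputable def x (i : Fin m) : MvPolynomial (Idx m) ℂ := X (Sum.inl (Sum.inl i))

noncomputable def y (i : Fin m) : MvPolynomial (Idx m) ℂ := X (Sum.inl (Sum.inr i))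

noncomputable def z : MvPolynomial (Idx m) ℂ := X (Sum.inr ())

/-- `sg i j` is the sign of `j - i`. -/
def sg (i j : Fin m) : ℂ := if i < j then 1 else if j < i then -1 else 0

/-- The antisymmetric family of polynomials determined by:
`P(x_i,x_j) = (1/2)x_i x_j` for `i < j`; `P(y_i,y_j) = -(1/2)y_i y_j` for `i < j`;
`P(z,x_i) = -(1/2)z x_i`; `P(z,y_i) = (1/2)z y_i`; `P(x_i,y_j) = (1/2)x_i y_j` for
`i ≠ j`; and `P(x_i,y_i) = -Σ_{l>i} x_l y_l - (1/2)z²`. -/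
noncomputable def P : Idx m → Idx m → MvPolynomial (Idx m) ℂ
  | Sum.inl (Sum.inl i), Sum.inl (Sum.inl j) => C (sg i j * (1/2)) * x i * x j
  | Sum.inl (Sum.inr i), Sum.inl (Sum.inr j) => -(C (sg i j * (1/2)) * y i * y j)
  | Sum.inl (Sum.inl i), Sum.inl (Sum.inr j) =>
      if i = j then -(∑ l ∈ Finset.Ioi i, x l * y l) - C (1/2) * z ^ 2
      else C (1/2) * x i * y j
  | Sum.inl (Sum.inr j), Sum.inl (Sum.inl i) =>
      -(if i = j then -(∑ l ∈ Finset.Ioi i, x l * y l) - C (1/2) * z ^ 2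
        else C (1/2) * x i * y j)
  | Sum.inr _, Sum.inl (Sum.inl i) => -(C (1/2) * z * x i)
  | Sum.inl (Sum.inl i), Sum.inr _ => C (1/2) * x i * z
  | Sum.inr _, Sum.inl (Sum.inr i) => C (1/2) * z * y i
  | Sum.inl (Sum.inr i), Sum.inr _ => -(C (1/2) * y i * z)
  | Sum.inr _, Sum.inr _ => 0

end StmtB

theorem Derivation.sum_apply {R A M ι : Type*} [CommSemiring R] [CommSemiring A]
    [Algebra R A] [AddCommMonoid M] [Module A M] [Module R M]
    (s : Finset ι) (D : ι → Derivation R A M) (a : A) :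
    (∑ i ∈ s, D i) a = ∑ i ∈ s, D i a :=
  (congrFun (map_sum Derivation.coeFnAddMonoidHom D s) a).trans (Finset.sum_apply _ _ _)

section

variable {σ : Type*} [Fintype σ] (P : σ → σ → MvPolynomial σ ℂ)

noncomputable def hamiltonian (f : MvPolynomial σ ℂ) :
    Derivation ℂ (MvPolynomial σ ℂ) (MvPolynomial σ ℂ) :=
  ∑ a, ∑ b, (P a b * pderiv a f) • pderiv b

theorem hamiltonian_apply (f g : MvPolynomial σ ℂ) :
    hamiltonian P f g = polyBracket P f g := by
  simp [hamiltonian, polyBracket, Derivation.sum_apply, mul_assoc]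

theorem polyBracket_X_X [DecidableEq σ] (a b : σ) : polyBracket P (X a) (X b) = P a b := by
  simp [polyBracket, pderiv_X, Pi.single_apply]

theorem polyBracket_mul_right (f g h : MvPolynomial σ ℂ) :
    polyBracket P f (g * h) = g * polyBracket P f h + h * polyBracket P f g := by
  rw [← hamiltonian_apply, Derivation.leibniz, smul_eq_mul, smul_eq_mul, hamiltonian_apply,
    hamiltonian_apply]

theorem polyBracket_neg_right (f g : MvPolynomial σ ℂ) :
    polyBracket P f (-g) = -polyBracket P f g := by
  rw [← hamiltonian_apply, map_neg, hamiltonian_apply]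

theorem polyBracket_C_right (f : MvPolynomial σ ℂ) (r : ℂ) : polyBracket P f (C r) = 0 := by
  rw [← hamiltonian_apply, derivation_C]

theorem polyBracket_C_mul_right (f g : MvPolynomial σ ℂ) (r : ℂ) :
    polyBracket P f (C r * g) = C r * polyBracket P f g := by
  rw [polyBracket_mul_right, polyBracket_C_right, mul_zero, add_zero]

theorem polyBracket_antisymm (hP : ∀ a b, P b a = -P a b) (f g : MvPolynomial σ ℂ) :
    polyBracket P g f = -polyBracket P f g := by
  rw [polyBracket, Finset.sum_comm, polyBracket, ← Finset.sum_neg_distrib]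
  refine Finset.sum_congr rfl fun a _ => ?_
  rw [← Finset.sum_neg_distrib]
  refine Finset.sum_congr rfl fun b _ => ?_
  rw [hP]; ring

theorem polyBracket_self (hP : ∀ a b, P b a = -P a b) (f : MvPolynomial σ ℂ) :
    polyBracket P f f = 0 :=
  self_eq_neg.mp (polyBracket_antisymm P hP f f)

noncomputable def jacobiator (f g h : MvPolynomial σ ℂ) : MvPolynomial σ ℂ :=
  polyBracket P f (polyBracket P g h) + polyBracket P g (polyBracket P h f) +
    polyBracket P h (polyBracket P f g)

theorem jacobiator_rotate (f g h : MvPolynomial σ ℂ) :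
    jacobiator P f g h = jacobiator P g h f := by
  simp only [jacobiator]; ring

theorem jacobiator_self_left (hP : ∀ a b, P b a = -P a b) (f h : MvPolynomial σ ℂ) :
    jacobiator P f f h = 0 := by
  have h0 : polyBracket P h 0 = 0 := by simpa using polyBracket_C_right P h 0
  rw [jacobiator, polyBracket_self P hP, h0, polyBracket_antisymm P hP h f, polyBracket_neg_right]
  ring

theorem jacobiator_eq_lie_sub (hP : ∀ a b, P b a = -P a b) (f g h : MvPolynomial σ ℂ) :
    jacobiator P f g h =
      (⁅hamiltonian P f, hamiltonian P g⁆ - hamiltonian P (polyBracket P f g)) h := by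
  rw [Derivation.sub_apply, Derivation.commutator_apply, jacobiator,
    polyBracket_antisymm P hP f h, polyBracket_antisymm P hP (polyBracket P f g) h]
  simp only [hamiltonian_apply, polyBracket_neg_right]
  ring

theorem jacobiator_eq_zero_of_X (hP : ∀ a b, P b a = -P a b) (f g : MvPolynomial σ ℂ)
    (hX : ∀ c, jacobiator P f g (X c) = 0) (h : MvPolynomial σ ℂ) :
    jacobiator P f g h = 0 := by
  have hD : ⁅hamiltonian P f, hamiltonian P g⁆ - hamiltonian P (polyBracket P f g) = 0 :=
    derivation_ext fun c => by rw [← jacobiator_eq_lie_sub P hP, hX, Derivation.zero_apply]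
  rw [jacobiator_eq_lie_sub P hP, hD, Derivation.zero_apply]

theorem jacobiator_eq_zero (hP : ∀ a b, P b a = -P a b)
    (hX : ∀ a b c, jacobiator P (X a) (X b) (X c) = 0) (f g h : MvPolynomial σ ℂ) :
    jacobiator P f g h = 0 := by
  refine jacobiator_eq_zero_of_X P hP f g (fun c => ?_) h
  rw [← jacobiator_rotate]
  refine jacobiator_eq_zero_of_X P hP _ f (fun b => ?_) g
  rw [← jacobiator_rotate]
  exact jacobiator_eq_zero_of_X P hP _ _ (hX b c) f

theorem jacobiator_eq_of_logCanonical (hP : ∀ a b, P b a = -P a b)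
    {f g h : MvPolynomial σ ℂ} {β γ : ℂ} (hgh : polyBracket P g h = C β * g * h)
    (hhf : polyBracket P h f = C γ * h * f) :
    jacobiator P f g h =
      polyBracket P h (polyBracket P f g) - C (γ - β) * h * polyBracket P f g := by
  have hfh : polyBracket P f h = -(C γ * h * f) := by rw [← hhf, polyBracket_antisymm P hP]
  have hgf : polyBracket P g f = -polyBracket P f g := polyBracket_antisymm P hP f g
  rw [jacobiator, hgh, hhf]
  simp only [mul_assoc, polyBracket_mul_right, polyBracket_C_right, hfh, hgf, hgh, map_sub]
  ring

end

namespace StmtB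

variable {m : ℕ}

theorem sg_antisymm (i j : Fin m) : sg j i = -sg i j := by
  unfold sg
  rcases lt_trichotomy i j with h | rfl | h
  · simp [h, h.not_gt]
  · simp
  · simp [h, h.not_gt]

theorem sg_mul_half_add_half {i j : Fin m} (h : i ≠ j) :
    sg i j * (1 / 2) + 1 / 2 = if i < j then 1 else 0 := by
  unfold sg
  rcases h.lt_or_gt with h | h
  · simp [h]; norm_num
  · simp [h, h.not_gt]

theorem P_antisymm (a b : Idx m) : P b a = -P a b := by
  rcases a with (i | i) | _ <;> rcases b with (j | j) | _ <;>
    simp only [P] <;> (try rw [sg_antisymm]) <;>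
    (try simp only [neg_mul, map_neg, eq_comm]) <;> ring

theorem P_self (a : Idx m) : P a a = 0 := self_eq_neg.mp (P_antisymm a a)

def Paired : Idx m → Idx m → Prop
  | .inl (.inl i), .inl (.inr j) => i = j
  | .inl (.inr i), .inl (.inl j) => i = j
  | _, _ => False

theorem Paired.symm {a b : Idx m} (h : Paired a b) : Paired b a := by
  rcases a with (i | i) | _ <;> rcases b with (j | j) | _ <;> simp_all [Paired]

theorem Paired.unique {a b c : Idx m} (hb : Paired a b) (hc : Paired a c) : b = c := by
  rcases a with (i | i) | _ <;> rcases b with (j | j) | _ <;> rcases c with (k | k) | _ <;>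
    simp_all [Paired]

noncomputable def logCoeff : Idx m → Idx m → ℂ
  | .inl (.inl i), .inl (.inl j) => sg i j * (1 / 2)
  | .inl (.inr i), .inl (.inr j) => -(sg i j * (1 / 2))
  | .inl (.inl _), .inl (.inr _) => 1 / 2
  | .inl (.inr _), .inl (.inl _) => -(1 / 2)
  | .inl (.inl _), .inr _ => 1 / 2
  | .inr _, .inl (.inl _) => -(1 / 2)
  | .inl (.inr _), .inr _ => -(1 / 2)
  | .inr _, .inl (.inr _) => 1 / 2
  | .inr _, .inr _ => 0

theorem logCoeff_antisymm (a b : Idx m) : logCoeff b a = -logCoeff a b := by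
  rcases a with (i | i) | _ <;> rcases b with (j | j) | _ <;>
    simp only [logCoeff] <;> (try rw [sg_antisymm]) <;> ring

theorem P_of_not_paired {a b : Idx m} (h : ¬ Paired a b) :
    P a b = C (logCoeff a b) * X a * X b := by
  rcases a with (i | i) | _ <;> rcases b with (j | j) | _ <;>
    simp_all [P, logCoeff, Paired, x, y, z, eq_comm, mul_right_comm]

theorem polyBracket_X_mul_X {w a b : Idx m} (ha : ¬ Paired w a) (hb : ¬ Paired w b) :
    polyBracket P (X w) (X a * X b) = C (logCoeff w a + logCoeff w b) * X w * (X a * X b) := by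
  rw [polyBracket_mul_right, polyBracket_X_X, polyBracket_X_X, P_of_not_paired ha,
    P_of_not_paired hb, map_add]
  ring

theorem P_diag (i : Fin m) :
    P (.inl (.inl i)) (.inl (.inr i)) = -(∑ l ∈ Finset.Ioi i, x l * y l) - C (1 / 2) * z ^ 2 :=
  if_pos rfl

theorem two_mul_C_half : (2 : MvPolynomial (Idx m) ℂ) * C (1 / 2) = 1 := by
  rw [← map_ofNat C 2, ← map_mul]; norm_num

-- `{x_j, ·}`, `{y_j, ·}` and `{z, ·}` satisfy the hypotheses with `ε = 1, -1, 0`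
-- (for `z` with `j = i`, which is why the conclusion reads `j ≤ i`).
theorem derivation_P_diag (D : Derivation ℂ (MvPolynomial (Idx m) ℂ) (MvPolynomial (Idx m) ℂ))
    (w : MvPolynomial (Idx m) ℂ) (ε : ℂ) (i j : Fin m)
    (hne : ∀ l, l ≠ j → D (x l * y l) = C (if j < l then ε else 0) * w * (x l * y l))
    (heq : D (x j * y j) = C ε * w * P (.inl (.inl j)) (.inl (.inr j)))
    (hz : D z = C ε * w * (C (1 / 2) * z)) :
    D (P (.inl (.inl i)) (.inl (.inr i))) =
      C (if j ≤ i then ε else 0) * w * P (.inl (.inl i)) (.inl (.inr i)) := by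
  have hz2 : D (C (1 / 2) * z ^ 2) = C ε * w * (C (1 / 2) * z ^ 2) := by
    rw [Derivation.leibniz, Derivation.leibniz_pow, derivation_C, hz, smul_eq_mul, smul_eq_mul,
      nsmul_eq_mul, smul_zero, add_zero]
    linear_combination (C ε * w * C (1 / 2) * z ^ 2) * two_mul_C_half
  rw [P_diag, map_sub, map_neg, map_sum, hz2]
  rcases le_or_gt j i with hji | hij
  · have hsum :
        ∑ l ∈ Finset.Ioi i, D (x l * y l) = C ε * w * ∑ l ∈ Finset.Ioi i, x l * y l := by
      rw [Finset.mul_sum]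
      refine Finset.sum_congr rfl fun l hl => ?_
      have hjl : j < l := hji.trans_lt (Finset.mem_Ioi.mp hl)
      rw [hne l hjl.ne', if_pos hjl]
    rw [hsum, if_pos hji]
    ring
  · have hsum : ∑ l ∈ (Finset.Ioi i).erase j, D (x l * y l) =
        C ε * w * ∑ l ∈ Finset.Ioi j, x l * y l := by
      have hfilter : ((Finset.Ioi i).erase j).filter (j < ·) = Finset.Ioi j := by
        ext l; simp only [Finset.mem_filter, Finset.mem_erase, Finset.mem_Ioi]; omega
      rw [← hfilter, Finset.sum_filter, Finset.mul_sum]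
      refine Finset.sum_congr rfl fun l hl => ?_
      rw [hne l (Finset.mem_erase.mp hl).1]
      split_ifs <;> simp
    rw [← Finset.add_sum_erase _ _ (Finset.mem_Ioi.mpr hij), heq, hsum, P_diag,
      if_neg hij.not_ge, map_zero]
    ring

theorem polyBracket_x_P_diag {i j : Fin m} (hji : j ≠ i) :
    polyBracket P (x j) (P (.inl (.inl i)) (.inl (.inr i))) =
      C (if j < i then 1 else 0) * x j * P (.inl (.inl i)) (.inl (.inr i)) := by
  have hne : ∀ l, l ≠ j →
      polyBracket P (x j) (x l * y l) = C (if j < l then 1 else 0) * x j * (x l * y l) := by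
    intro l hl
    rw [x, x, y, polyBracket_X_mul_X (by simp [Paired]) (by simpa [Paired] using hl.symm)]
    simp only [logCoeff, sg_mul_half_add_half hl.symm]
  have heq : polyBracket P (x j) (x j * y j) = C 1 * x j * P (.inl (.inl j)) (.inl (.inr j)) := by
    rw [polyBracket_mul_right, x, y, polyBracket_X_X, polyBracket_X_X, P_self]
    simp
  have hz : polyBracket P (x j) z = C 1 * x j * (C (1 / 2) * z) := by
    simp only [x, z, polyBracket_X_X, P, map_one]
    ring
  simp only [← hamiltonian_apply] at hne heq hz ⊢
  simp only [derivation_P_diag _ (x j) 1 i j hne heq hz, hji.le_iff_lt]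

theorem polyBracket_y_P_diag {i j : Fin m} (hji : j ≠ i) :
    polyBracket P (y j) (P (.inl (.inl i)) (.inl (.inr i))) =
      C (if j < i then -1 else 0) * y j * P (.inl (.inl i)) (.inl (.inr i)) := by
  have hne : ∀ l, l ≠ j →
      polyBracket P (y j) (x l * y l) = C (if j < l then -1 else 0) * y j * (x l * y l) := by
    intro l hl
    rw [y, x, y, polyBracket_X_mul_X (by simpa [Paired] using hl.symm) (by simp [Paired])]
    simp only [logCoeff, ← neg_add, add_comm (1 / 2 : ℂ), sg_mul_half_add_half hl.symm]
    split_ifs <;> simp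
  have heq : polyBracket P (y j) (x j * y j) =
      C (-1) * y j * P (.inl (.inl j)) (.inl (.inr j)) := by
    rw [polyBracket_mul_right, x, y, polyBracket_X_X, polyBracket_X_X, P_self, P_antisymm]
    simp
  have hz : polyBracket P (y j) z = C (-1) * y j * (C (1 / 2) * z) := by
    simp only [y, z, polyBracket_X_X, P, map_neg, map_one]
    ring
  simp only [← hamiltonian_apply] at hne heq hz ⊢
  simp only [derivation_P_diag _ (y j) (-1) i j hne heq hz, hji.le_iff_lt]

theorem polyBracket_z_P_diag (i : Fin m) :
    polyBracket P z (P (.inl (.inl i)) (.inl (.inr i))) = 0 := by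
  have hxy : ∀ l : Fin m, polyBracket P z (x l * y l) = 0 := by
    intro l
    rw [x, y, z, polyBracket_X_mul_X (by simp [Paired]) (by simp [Paired])]
    simp [logCoeff]
  have hz : polyBracket P z (z : MvPolynomial (Idx m) ℂ) = 0 := by
    rw [z, polyBracket_X_X, P_self]
  simp only [← hamiltonian_apply] at hxy hz ⊢
  rw [derivation_P_diag _ z 0 i i (fun l _ => by simp [hxy]) (by simp [hxy]) (by simp [hz])]
  simp

theorem polyBracket_X_P_diag {w : Idx m} {i : Fin m} (hx : ¬ Paired w (.inl (.inl i)))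
    (hy : ¬ Paired w (.inl (.inr i))) :
    polyBracket P (X w) (P (.inl (.inl i)) (.inl (.inr i))) =
      C (logCoeff w (.inl (.inl i)) + logCoeff w (.inl (.inr i))) * X w *
        P (.inl (.inl i)) (.inl (.inr i)) := by
  rcases w with (j | j) | ⟨⟨⟩⟩
  · have hji : j ≠ i := hy
    rw [← x, polyBracket_x_P_diag hji]
    simp only [logCoeff, sg_mul_half_add_half hji]
  · have hji : j ≠ i := hx
    rw [← y, polyBracket_y_P_diag hji]
    simp only [logCoeff, ← neg_add, add_comm (1 / 2 : ℂ), sg_mul_half_add_half hji]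
    split_ifs <;> simp
  · rw [← z, polyBracket_z_P_diag]
    simp [logCoeff]

theorem polyBracket_X_P {w a b : Idx m} (ha : ¬ Paired w a) (hb : ¬ Paired w b) :
    polyBracket P (X w) (P a b) = C (logCoeff w a + logCoeff w b) * X w * P a b := by
  by_cases hab : Paired a b
  · rcases a with (i | i) | _ <;> rcases b with (j | j) | _ <;> simp only [Paired] at hab <;>
      subst hab
    · exact polyBracket_X_P_diag ha hb
    · rw [P_antisymm, polyBracket_neg_right, polyBracket_X_P_diag hb ha,
        add_comm (logCoeff w _)]
      ring
  · rw [P_of_not_paired hab, mul_assoc, polyBracket_C_mul_right, polyBracket_X_mul_X ha hb]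
    ring

theorem jacobiator_X_X_X_of_not_paired {a b c : Idx m} (hca : ¬ Paired c a)
    (hcb : ¬ Paired c b) : jacobiator P (X a) (X b) (X c) = 0 := by
  have hPbc : polyBracket P (X b) (X c) = C (logCoeff b c) * X b * X c := by
    rw [polyBracket_X_X, P_of_not_paired fun h => hcb h.symm]
  have hPca : polyBracket P (X c) (X a) = C (logCoeff c a) * X c * X a := by
    rw [polyBracket_X_X, P_of_not_paired hca]
  rw [jacobiator_eq_of_logCanonical P P_antisymm hPbc hPca, polyBracket_X_X,
    polyBracket_X_P hca hcb, logCoeff_antisymm b c, ← sub_eq_add_neg, sub_self]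

theorem jacobiator_X_X_X (a b c : Idx m) : jacobiator P (X a) (X b) (X c) = 0 := by
  by_cases hab : a = b
  · rw [hab, jacobiator_self_left P P_antisymm]
  by_cases hbc : b = c
  · rw [hbc, jacobiator_rotate, jacobiator_self_left P P_antisymm]
  by_cases hca : c = a
  · rw [hca, ← jacobiator_rotate, jacobiator_self_left P P_antisymm]
  by_cases hpca : Paired c a
  · rw [← jacobiator_rotate]
    exact jacobiator_X_X_X_of_not_paired (fun h => hab (hpca.unique h.symm))
      (fun h => hbc (h.symm.unique hpca.symm))
  by_cases hpcb : Paired c b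
  · rw [jacobiator_rotate]
    exact jacobiator_X_X_X_of_not_paired (fun h => hca (h.symm.unique hpcb.symm).symm)
      (fun h => hpca h.symm)
  exact jacobiator_X_X_X_of_not_paired hpca hpcb

end StmtB

theorem jacobi_odd_quantum_euclidean_general (N : ℕ)
    (f g h : MvPolynomial (StmtB.Idx (N - 1)) ℂ) :
    polyBracket StmtB.P f (polyBracket StmtB.P g h) +
      polyBracket StmtB.P g (polyBracket StmtB.P h f) +
      polyBracket StmtB.P h (polyBracket StmtB.P f g) = 0 :=
  jacobiator_eq_zero StmtB.P StmtB.P_antisymm StmtB.jacobiator_X_X_X f g h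

/-- For `N ≥ 2`, the bracket on `ℂ[x_2,…,x_N,y_2,…,y_N,z]` determined by
`{x_i,x_j} = (1/2)x_i x_j` (`i<j`), `{y_i,y_j} = -(1/2)y_i y_j` (`i<j`),
`{z,x_i} = -(1/2)z x_i`, `{z,y_i} = (1/2)z y_i`, `{x_i,y_j} = (1/2)x_i y_j` (`i≠j`),
`{x_i,y_i} = -Σ_{l=i+1}^N x_l y_l - (1/2)z²` satisfies the Jacobi identity,
i.e. it is a Poisson bracket (the quasiclassical limit of odd-dimensional
quantum Euclidean space). -/
theorem jacobi_odd_quantum_euclidean (N : ℕ) (hN : 2 ≤ N)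
    (f g h : MvPolynomial (StmtB.Idx (N - 1)) ℂ) :
    polyBracket StmtB.P f (polyBracket StmtB.P g h) +
      polyBracket StmtB.P g (polyBracket StmtB.P h f) +
      polyBracket StmtB.P h (polyBracket StmtB.P f g) = 0 :=
  jacobi_odd_quantum_euclidean_general N f g h
end
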